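/- arXiv:0805.2860 — 2 statements merged into one kernel-verified Lean document; each statement's English description precedes it below -/
import Mathlib

section
/- If T is a standard Young tableau with n boxes whose descent set equals {μ_1, μ_1+μ_2, ..., μ_1+⋯+μ_{r-1}} for a partition μ = (μ_1,...,μ_r) of n, then the shape of T dominates μ, i.e., μ(T)_1 + ⋯ + μ(T)_i ≥ μ_1 + ⋯ + μ_i for all i. -/
/-!
Every step down one row costs a descent: the cell directly above the entry `j + 1` holds a
smaller entry `j' + 1`, and somewhere in `(j', j]` the row index must strictly increase. So
the entry `j + 1` lies in a row of index at most `#{d ∈ Des(T) | d ≤ j}`. When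
`Des(T) = {μ_1, μ_1 + μ_2, …}`, the entries `1, …, μ_1 + ⋯ + μ_i` see at most `i - 1`
descents, hence all lie in the first `i` rows, which therefore contain at least
`μ_1 + ⋯ + μ_i` cells.
-/

/-- A standard Young tableau with `n` boxes, encoded by the positions of its entries:
`T j` is the (row, column) position (0-indexed) of the entry `j + 1`. The condition says
that `T` is injective and every initial segment of positions forms a Young diagram
(a downward-closed set of cells); this is equivalent to rows and columns being increasing
and the image being a Young diagram. -/
def IsSYT (n : ℕ) (T : Fin n → Fin n × Fin n) : Prop :=
  Function.Injective T ∧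
    ∀ k i : Fin n, i ≤ k → ∀ p : Fin n × Fin n,
      p.1 ≤ (T i).1 → p.2 ≤ (T i).2 → ∃ j, j ≤ k ∧ T j = p

/-- The row (0-indexed) of the entry `i + 1` of `T`, junk value `0` out of range. -/
def rowOfEntry {n : ℕ} (T : Fin n → Fin n × Fin n) (i : ℕ) : ℕ :=
  if h : i < n then ((T ⟨i, h⟩).1 : ℕ) else 0

/-- The descent set of a standard Young tableau:
`Des(T) = {i ∈ [n-1] : i appears strictly above i + 1 in T}`. -/
def sytDes {n : ℕ} (T : Fin n → Fin n × Fin n) : Finset ℕ :=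
  (Finset.Ico 1 n).filter fun i => rowOfEntry T (i - 1) < rowOfEntry T i

/-- The length of row `r` (0-indexed) of `T`; the function `rowLen T` is the shape of `T`. -/
def rowLen {n : ℕ} (T : Fin n → Fin n × Fin n) (r : ℕ) : ℕ :=
  (Finset.univ.filter fun j : Fin n => ((T j).1 : ℕ) = r).card

/-- `μ : ℕ → ℕ` (parts indexed from `0`) is a partition of `n`. -/
def IsPartitionOf (n : ℕ) (μ : ℕ → ℕ) : Prop :=
  (∀ i j : ℕ, i ≤ j → μ j ≤ μ i) ∧ (∑ i ∈ Finset.range n, μ i = n) ∧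
    ∀ i : ℕ, n ≤ i → μ i = 0

/-- The descent set `{μ_1, μ_1 + μ_2, …, μ_1 + ⋯ + μ_{r-1}}` associated to the partition
`μ` with `r` positive parts (0-indexed: the partial sums `μ_0 + ⋯ + μ_{s-1}` over the
nonempty rows `s ≥ 1`). -/
def desOfShape (n : ℕ) (μ : ℕ → ℕ) : Finset ℕ :=
  ((Finset.Ico 1 n).filter fun s => 0 < μ s).image fun s => ∑ t ∈ Finset.range s, μ t

open Finset

lemma rowOfEntry_coe {n : ℕ} (T : Fin n → Fin n × Fin n) (j : Fin n) :
    rowOfEntry T j = (T j).1 := by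
  simp [rowOfEntry]

lemma exists_mem_sytDes_of_rowOfEntry_lt {n : ℕ} (T : Fin n → Fin n × Fin n) {a b : ℕ}
    (hab : a < b) (hb : b < n) (hrow : rowOfEntry T a < rowOfEntry T b) :
    ∃ d ∈ sytDes T, a < d ∧ d ≤ b := by
  induction b, hab using Nat.le_induction with
  | base => exact ⟨a + 1, mem_filter.2 ⟨mem_Ico.2 ⟨by omega, hb⟩, hrow⟩, by omega, le_rfl⟩
  | succ b hab ih =>
    by_cases hdes : rowOfEntry T b < rowOfEntry T (b + 1)
    · exact ⟨b + 1, mem_filter.2 ⟨mem_Ico.2 ⟨by omega, hb⟩, hdes⟩, by omega, le_rfl⟩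
    · obtain ⟨d, hd, had, hdb⟩ := ih (by omega) (by omega)
      exact ⟨d, hd, had, by omega⟩

lemma card_filter_le_lt_of_mem {s : Finset ℕ} {a b d : ℕ} (hd : d ∈ s) (had : a < d)
    (hdb : d ≤ b) : #{x ∈ s | x ≤ a} < #{x ∈ s | x ≤ b} := by
  refine card_lt_card ((ssubset_iff_of_subset ?_).2 ⟨d, ?_, ?_⟩)
  · exact monotone_filter_right s fun x _ (hx : x ≤ a) => hx.trans (by omega)
  · exact mem_filter.2 ⟨hd, hdb⟩
  · simp only [mem_filter, not_and, not_le]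
    exact fun _ => had

lemma IsSYT.exists_lt_of_row_pos {n : ℕ} {T : Fin n → Fin n × Fin n} (hT : IsSYT n T)
    (j : Fin n) (hj : 0 < ((T j).1 : ℕ)) : ∃ j' < j, ((T j').1 : ℕ) = (T j).1 - 1 := by
  obtain ⟨j', hj'j, hj'⟩ := hT.2 j j le_rfl (⟨(T j).1 - 1, by omega⟩, (T j).2)
    (Fin.le_def.2 (by simp only; omega)) le_rfl
  have hrow : ((T j').1 : ℕ) = (T j).1 - 1 := by rw [hj']
  refine ⟨j', lt_of_le_of_ne hj'j fun h => ?_, hrow⟩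
  rw [h] at hrow
  omega

lemma IsSYT.row_le_card_sytDes {n : ℕ} {T : Fin n → Fin n × Fin n} (hT : IsSYT n T)
    (j : Fin n) : ((T j).1 : ℕ) ≤ #{d ∈ sytDes T | d ≤ (j : ℕ)} := by
  induction j using WellFoundedLT.induction with
  | ind j ih =>
    rcases Nat.eq_zero_or_pos ((T j).1 : ℕ) with h0 | hpos
    · omega
    obtain ⟨j', hj'j, hrow⟩ := hT.exists_lt_of_row_pos j hpos
    obtain ⟨d, hd, hj'd, hdj⟩ := exists_mem_sytDes_of_rowOfEntry_lt T hj'j j.isLt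
      (by rw [rowOfEntry_coe, rowOfEntry_coe, hrow]; omega)
    have hcard := card_filter_le_lt_of_mem hd hj'd hdj
    have hj' := ih j' hj'j
    omega

lemma card_filter_desOfShape_lt {n j i : ℕ} {μ : ℕ → ℕ} (hj : j < ∑ t ∈ range i, μ t) :
    #{d ∈ desOfShape n μ | d ≤ j} < i := by
  set S : ℕ → ℕ := fun k => ∑ t ∈ range k, μ t
  have hS : Monotone S := fun a b hab => sum_le_sum_of_subset (range_subset_range.2 hab)
  have hsub : {d ∈ desOfShape n μ | d ≤ j} ⊆ (Ico 1 i).image S := by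
    simp only [subset_iff, mem_filter, desOfShape, mem_image, mem_Ico]
    rintro _ ⟨⟨s, ⟨⟨hs1, -⟩, -⟩, rfl⟩, hsj⟩
    refine ⟨s, ⟨hs1, ?_⟩, rfl⟩
    by_contra! his
    exact (hS his).not_gt (hsj.trans_lt hj)
  have hi : 0 < i := Nat.pos_of_ne_zero (by rintro rfl; simp at hj)
  calc #{d ∈ desOfShape n μ | d ≤ j} ≤ #((Ico 1 i).image S) := card_le_card hsub
    _ ≤ #(Ico 1 i) := card_image_le
    _ < i := by rw [Nat.card_Ico]; omega

lemma IsPartitionOf.sum_range_le {n : ℕ} {μ : ℕ → ℕ} (hμ : IsPartitionOf n μ) (k : ℕ) :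
    ∑ t ∈ range k, μ t ≤ n :=
  calc ∑ t ∈ range k, μ t ≤ ∑ t ∈ range (n + k), μ t :=
        sum_le_sum_of_subset (range_subset_range.2 (by omega))
    _ = n := by
      rw [sum_range_add, hμ.2.1, sum_eq_zero fun x _ => hμ.2.2 (n + x) (by omega), add_zero]

lemma sum_range_rowLen {n : ℕ} (T : Fin n → Fin n × Fin n) (i : ℕ) :
    ∑ t ∈ range i, rowLen T t = #{j | ((T j).1 : ℕ) < i} := by
  simpa only [rowLen, mem_range] using
    sum_card_fiberwise_eq_card_filter univ (range i) fun j => ((T j).1 : ℕ)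

/-- If a standard Young tableau `T` with `n` boxes has descent set
`{μ_1, μ_1+μ_2, …, μ_1+⋯+μ_{r-1}}` for a partition `μ` of `n`, then the shape of `T`
dominates `μ`. -/
theorem stmt5 (n : ℕ) (μ : ℕ → ℕ) (hμ : IsPartitionOf n μ)
    (T : Fin n → Fin n × Fin n) (hT : IsSYT n T) (hdes : sytDes T = desOfShape n μ) :
    ∀ i : ℕ, ∑ t ∈ Finset.range i, μ t ≤ ∑ t ∈ Finset.range i, rowLen T t := by
  intro i
  have hrow : ∀ j : Fin n, (j : ℕ) < ∑ t ∈ range i, μ t → ((T j).1 : ℕ) < i := by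
    intro j hj
    have hle := hT.row_le_card_sytDes j
    rw [hdes] at hle
    have hlt := card_filter_desOfShape_lt (n := n) hj
    omega
  calc ∑ t ∈ range i, μ t = #{j : Fin n | (j : ℕ) < ∑ t ∈ range i, μ t} := by
        rw [Fin.card_filter_val_lt, min_eq_right (hμ.sum_range_le i)]
    _ ≤ #{j | ((T j).1 : ℕ) < i} := card_le_card (monotone_filter_right _ fun j _ => hrow j)
    _ = ∑ t ∈ range i, rowLen T t := (sum_range_rowLen T i).symm
end

section
/- For any k subsets D_1,...,D_k ⊆ [n-1] and any permutation π of {1,...,k}, the number of k-tuples (σ_1,...,σ_k) of permutations in S_n with σ_1⋯σ_k = identity and Des(σ_i) = D_i for all i equals the number of such tuples with Des(σ_i) = D_{π(i)} for all i. -/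
/-!
Let `N(E)` count the factorizations `σ₀ ⋯ σ_{k-1} = 1` with `Des σᵢ ⊆ Eᵢ`. Summing the exact
counts over all `F ≤ E` gives `N(E)`, so by Möbius inversion on families of finite sets it suffices
to show that `N` is invariant under permuting the `Eᵢ`.

Cutting `{0, …, n-1}` before the positions in `D`, `Des σ ⊆ D` iff `σ` increases on every block.
Put `tᵢ = σᵢ ⋯ σ_{k-1}` and label `x` by the vector whose `i`-th entry is the `Eᵢ`-block of
`tᵢ₊₁ x`. Since `σᵢ = tᵢ tᵢ₊₁⁻¹`, the permutation `tᵢ₊₁` orders `Fin n` lexicographically by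
(`i`-th label, `tᵢ`); starting from `t₀ = 1` the labels therefore determine every `tᵢ`, and
`t_k = 1` says exactly that the label vectors are colexicographically sorted. So `N(E)` is the
number of multisets of `n` vectors in `ℕᵏ` whose `i`-th coordinates form the multiset of block
indices of `Eᵢ`, which is visibly symmetric in the `Eᵢ`.
-/

/-- The value of `σ` at 0-based index `i`, junk value `0` out of range. -/
def permVal {n : ℕ} (σ : Equiv.Perm (Fin n)) (i : ℕ) : ℕ :=
  if h : i < n then (σ ⟨i, h⟩ : ℕ) else 0

/-- The descent set `Des(σ) = {i ∈ [n-1] : σ(i) > σ(i+1)}` (positions 1-based). -/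
def permDes {n : ℕ} (σ : Equiv.Perm (Fin n)) : Finset ℕ :=
  (Finset.Ico 1 n).filter fun i => permVal σ i < permVal σ (i - 1)

open Finset

theorem comp_orderIso_eq_of_sum_Iic {α M : Type*} [PartialOrder α] [LocallyFiniteOrderBot α]
    [WellFoundedLT α] [AddCancelCommMonoid M] {f g : α → M} (e : α ≃o α)
    (hfg : ∀ x, f x = ∑ y ∈ Iic x, g y) (hf : ∀ x, f (e x) = f x) (x : α) : g (e x) = g x := by
  induction x using WellFoundedLT.induction with
  | _ x ih =>
    have hlower : ∑ y ∈ Iio (e x), g y = ∑ y ∈ Iio x, g y := by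
      rw [← sum_equiv e.toEquiv (s := Iio x) (g := g) (f := g ∘ e) (fun y => by simp)
        (fun _ _ => rfl)]
      exact sum_congr rfl fun y hy => ih y (mem_Iio.1 hy)
    have hfx := hf x
    rw [hfg, hfg, Iic_eq_cons_Iio, sum_cons, Iic_eq_cons_Iio, sum_cons, hlower] at hfx
    exact add_right_cancel hfx

def Equiv.Perm.compOrderIso {ι β : Type*} [Preorder β] (π : Equiv.Perm ι) :
    (ι → β) ≃o (ι → β) where
  toFun F := F ∘ π
  invFun F := F ∘ π.symm
  left_inv F := by ext; simp
  right_inv F := by ext; simp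
  map_rel_iff' := ⟨fun h i => by simpa using h (π.symm i), fun h i => h (π i)⟩

theorem Equiv.Perm.eq_of_lt_iff_lt {n : ℕ} {a b : Equiv.Perm (Fin n)}
    (h : ∀ x y, a x < a y ↔ b x < b y) : a = b := by
  have hmono : Monotone (b * a⁻¹) := StrictMono.monotone fun p q hpq => by
    simpa using (h (a⁻¹ p) (a⁻¹ q)).1 (by simpa using hpq)
  rw [Equiv.Perm.monotone_iff, mul_inv_eq_one] at hmono
  exact hmono.symm

theorem Tuple.lt_iff_sort_inv_lt {n : ℕ} {α : Type*} [LinearOrder α] {w : Fin n → α}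
    (hw : Function.Injective w) (x y : Fin n) :
    w x < w y ↔ (Tuple.sort w)⁻¹ x < (Tuple.sort w)⁻¹ y := by
  have hs : StrictMono (w ∘ Tuple.sort w) :=
    (Tuple.monotone_sort w).strictMono_of_injective (hw.comp (Equiv.injective _))
  simpa using hs.lt_iff_lt (a := (Tuple.sort w)⁻¹ x) (b := (Tuple.sort w)⁻¹ y)

theorem Multiset.map_univ_val_comp_equiv {α β : Type*} [Fintype α] (f : α → β) (e : α ≃ α) :
    univ.val.map (f ∘ e) = univ.val.map f := by
  rw [← Multiset.map_map, Multiset.map_univ_val_equiv]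

theorem eq_of_monotone_of_map_univ_eq {n : ℕ} {β : Type*} [LinearOrder β] {f g : Fin n → β}
    (hf : Monotone f) (hg : Monotone g) (h : univ.val.map f = univ.val.map g) : f = g := by
  rw [Fin.univ_val_map, Fin.univ_val_map, Multiset.coe_eq_coe] at h
  exact List.ofFn_injective (h.eq_of_sortedLE hf.sortedLE_ofFn hg.sortedLE_ofFn)

theorem exists_monotone_map_univ_eq {n : ℕ} {β : Type*} [LinearOrder β] (M : Multiset β)
    (hM : Multiset.card M = n) : ∃ f : Fin n → β, Monotone f ∧ univ.val.map f = M := by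
  obtain ⟨l, rfl⟩ : ∃ l : List β, (l : Multiset β) = M := ⟨M.toList, M.coe_toList⟩
  rw [Multiset.coe_card] at hM
  subst hM
  refine ⟨l.get ∘ Tuple.sort l.get, Tuple.monotone_sort _, ?_⟩
  rw [Multiset.map_univ_val_comp_equiv, Fin.univ_val_map, List.ofFn_get]

/-- Cutting `{0, …, n-1}` just before each position in `D`, `blockIndex D p` numbers the block
containing `p`. -/
def blockIndex (D : Finset ℕ) (p : ℕ) : ℕ := #(D ∩ Ioc 0 p)

theorem blockIndex_mono (D : Finset ℕ) : Monotone (blockIndex D) := fun _ _ hpq =>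
  card_le_card (inter_subset_inter le_rfl (Ioc_subset_Ioc_right hpq))

theorem blockIndex_eq_iff {D : Finset ℕ} {p q : ℕ} (hpq : p ≤ q) :
    blockIndex D p = blockIndex D q ↔ ∀ i ∈ D, p < i → q < i := by
  have hsub : D ∩ Ioc 0 p ⊆ D ∩ Ioc 0 q := inter_subset_inter le_rfl (Ioc_subset_Ioc_right hpq)
  constructor
  · intro h i hi hpi
    by_contra! hiq
    have hlt := card_lt_card <| (ssubset_iff_of_subset hsub).2
      ⟨i, by simp [hi]; omega, by simp [hi]; omega⟩
    exact hlt.ne h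
  · intro h
    refine congrArg card (Subset.antisymm hsub fun i hi => ?_)
    simp only [mem_inter, mem_Ioc] at hi ⊢
    exact ⟨hi.1, hi.2.1, not_lt.1 fun hpi => (h i hi.1 hpi).not_ge hi.2.2⟩

theorem permVal_of_lt {n : ℕ} (σ : Equiv.Perm (Fin n)) {i : ℕ} (hi : i < n) :
    permVal σ i = σ ⟨i, hi⟩ :=
  dif_pos hi

theorem permDes_subset_iff {n : ℕ} (σ : Equiv.Perm (Fin n)) (D : Finset ℕ) :
    permDes σ ⊆ D ↔
      ∀ p q : Fin n, p < q → blockIndex D p = blockIndex D q → σ p < σ q := by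
  constructor
  · intro hD p q hpq hblock
    have hascent : StrictMonoOn (permVal σ) (Set.Icc p q) := by
      refine strictMonoOn_of_lt_add_one Set.ordConnected_Icc fun a _ ha ha1 => ?_
      have han : a + 1 < n := lt_of_le_of_lt ha1.2 q.isLt
      have hnotD : a + 1 ∉ D := fun hmem =>
        ((blockIndex_eq_iff (Fin.le_iff_val_le_val.1 hpq.le)).1 hblock _ hmem
          (by have := ha.1; omega)).not_ge ha1.2
      have hnotDes : ¬ permVal σ (a + 1) < permVal σ a := fun hdes =>
        hnotD (hD (mem_filter.2 ⟨mem_Ico.2 ⟨by omega, han⟩, by simpa using hdes⟩))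
      rw [permVal_of_lt σ (by omega : a < n), permVal_of_lt σ han] at hnotDes ⊢
      refine lt_of_le_of_ne (not_lt.1 hnotDes) fun heq => ?_
      simpa using σ.injective (Fin.ext heq)
    simpa [permVal_of_lt] using hascent ⟨le_rfl, hpq.le⟩ ⟨hpq.le, le_rfl⟩ hpq
  · intro h i hi
    obtain ⟨hrange, hdes⟩ := mem_filter.1 hi
    obtain ⟨hi1, hin⟩ := mem_Ico.1 hrange
    by_contra hiD
    have hblock : blockIndex D (i - 1) = blockIndex D i :=
      (blockIndex_eq_iff (by omega)).2 fun j hj hij => by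
        rcases (by omega : j = i ∨ i < j) with rfl | hlt
        · exact absurd hj hiD
        · exact hlt
    have hascent := h ⟨i - 1, by omega⟩ ⟨i, hin⟩ (Fin.mk_lt_mk.2 (by omega)) hblock
    rw [permVal_of_lt σ hin, permVal_of_lt σ (by omega : i - 1 < n)] at hdes
    exact hdes.not_gt hascent

theorem permDes_mul_inv_subset_iff {n : ℕ} (a b : Equiv.Perm (Fin n)) (D : Finset ℕ) :
    permDes (a * b⁻¹) ⊆ D ↔ ∀ x y, b x < b y ↔
      toLex (blockIndex D (b x), a x) < toLex (blockIndex D (b y), a y) := by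
  rw [permDes_subset_iff]
  set F : Fin n → Lex (ℕ × Fin n) := fun z => toLex (blockIndex D z, (a * b⁻¹) z) with hF
  have hFb : ∀ x, F (b x) = toLex (blockIndex D (b x), a x) := by simp [hF]
  simp only [← hFb]
  constructor
  · intro h x y
    have hmono : StrictMono F := fun p q hpq =>
      Prod.Lex.toLex_lt_toLex.2 <| (blockIndex_mono D (Fin.le_iff_val_le_val.1 hpq.le)).lt_or_eq.imp
        id fun hpq' => ⟨hpq', h p q hpq hpq'⟩
    exact hmono.lt_iff_lt.symm
  · intro h p q hpq hblock
    have hFpq := (h (b⁻¹ p) (b⁻¹ q)).1 (by simpa using hpq)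
    simp only [hF, Equiv.Perm.coe_inv, Equiv.apply_symm_apply, Prod.Lex.toLex_lt_toLex,
      hblock] at hFpq
    exact hFpq.resolve_left (lt_irrefl _) |>.2

def colexKey (k : ℕ) : (Fin k → ℕ) ≃ Lex (Fin k → ℕ) where
  toFun a := toLex (a ∘ Fin.rev)
  invFun b := ofLex b ∘ Fin.rev
  left_inv a := by ext; simp
  right_inv b := by funext i; simp

theorem colexKey_lt_iff {k : ℕ} {a b : Fin k → ℕ} :
    colexKey k a < colexKey k b ↔ ∃ j, a j < b j ∧ ∀ j', j < j' → a j' = b j' := by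
  change (∃ i : Fin k, (∀ j : Fin k, j < i → a j.rev = b j.rev) ∧ a i.rev < b i.rev) ↔ _
  constructor
  · rintro ⟨i, heq, hlt⟩
    exact ⟨i.rev, hlt, fun j' hj' => by simpa using heq j'.rev (Fin.rev_lt_iff.1 hj')⟩
  · rintro ⟨j, hlt, heq⟩
    exact ⟨j.rev, fun j' hj' => heq _ (Fin.lt_rev_iff.1 hj'), by simpa using hlt⟩

section

variable {n k : ℕ}

/-- `ColexLT v i x y`: the vectors `v x` and `v y`, cut down to their coordinates below `i`,
compare colexicographically, with ties broken by `x < y`. -/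
def ColexLT (v : Fin n → Fin k → ℕ) (i : ℕ) (x y : Fin n) : Prop :=
  (∃ j : Fin k, j < i ∧ v x j < v y j ∧ ∀ j' : Fin k, j < j' → (j' : ℕ) < i → v x j' = v y j') ∨
    ((∀ j : Fin k, (j : ℕ) < i → v x j = v y j) ∧ x < y)

theorem colexLT_zero (v : Fin n → Fin k → ℕ) (x y : Fin n) : ColexLT v 0 x y ↔ x < y := by
  simp [ColexLT]

theorem colexLT_succ (v : Fin n → Fin k → ℕ) {i : ℕ} (hi : i < k) (x y : Fin n) :
    ColexLT v (i + 1) x y ↔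
      v x ⟨i, hi⟩ < v y ⟨i, hi⟩ ∨ (v x ⟨i, hi⟩ = v y ⟨i, hi⟩ ∧ ColexLT v i x y) := by
  have hlast : ∀ j : Fin k, (j : ℕ) < i + 1 ↔ (j : ℕ) < i ∨ j = ⟨i, hi⟩ := fun ⟨j, _⟩ => by
    simp only [Fin.mk.injEq]; omega
  constructor
  · rintro (⟨j, hj, hlt, heq⟩ | ⟨heq, hxy⟩)
    · rcases (hlast j).1 hj with hj | rfl
      · exact Or.inr ⟨heq _ hj (by simp), Or.inl ⟨j, hj, hlt, fun j' h1 h2 => heq j' h1 (by omega)⟩⟩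
      · exact Or.inl hlt
    · exact Or.inr ⟨heq _ (by simp), Or.inr ⟨fun j hj => heq j (by omega), hxy⟩⟩
  · rintro (hlt | ⟨hi_eq, ⟨j, hj, hlt, heq⟩ | ⟨heq, hxy⟩⟩)
    · refine Or.inl ⟨⟨i, hi⟩, by simp, hlt, fun j' h1 h2 => absurd h2 ?_⟩
      rw [Fin.lt_def] at h1
      simp only at h1
      omega
    · refine Or.inl ⟨j, by omega, hlt, fun j' h1 h2 => ?_⟩
      rcases (hlast j').1 h2 with h2 | rfl
      · exact heq j' h1 h2
      · exact hi_eq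
    · refine Or.inr ⟨fun j hj => ?_, hxy⟩
      rcases (hlast j).1 hj with hj | rfl
      · exact heq j hj
      · exact hi_eq

theorem colexLT_iff_toLex_colexKey (v : Fin n → Fin k → ℕ) (x y : Fin n) :
    ColexLT v k x y ↔ toLex (colexKey k (v x), x) < toLex (colexKey k (v y), y) := by
  simp only [ColexLT, Fin.is_lt, true_implies, true_and, Prod.Lex.toLex_lt_toLex, colexKey_lt_iff,
    (colexKey k).injective.eq_iff, funext_iff]

theorem lt_iff_colexLT {v : Fin n → Fin k → ℕ} {t : ℕ → Equiv.Perm (Fin n)} (h0 : t 0 = 1)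
    (hstep : ∀ i (hi : i < k) x y,
      t (i + 1) x < t (i + 1) y ↔ toLex (v x ⟨i, hi⟩, t i x) < toLex (v y ⟨i, hi⟩, t i y))
    {i : ℕ} (hi : i ≤ k) (x y : Fin n) : t i x < t i y ↔ ColexLT v i x y := by
  induction i with
  | zero => rw [h0, colexLT_zero]; rfl
  | succ i ih =>
    rw [hstep i hi, colexLT_succ v hi, Prod.Lex.toLex_lt_toLex, ih (by omega)]

theorem eq_one_iff_monotone_colexKey {v : Fin n → Fin k → ℕ} {t : ℕ → Equiv.Perm (Fin n)}
    (h0 : t 0 = 1)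
    (hstep : ∀ i (hi : i < k) x y,
      t (i + 1) x < t (i + 1) y ↔ toLex (v x ⟨i, hi⟩, t i x) < toLex (v y ⟨i, hi⟩, t i y)) :
    t k = 1 ↔ Monotone (colexKey k ∘ v) := by
  have hk : ∀ x y, t k x < t k y ↔ toLex (colexKey k (v x), x) < toLex (colexKey k (v y), y) :=
    fun x y => (lt_iff_colexLT h0 hstep le_rfl x y).trans (colexLT_iff_toLex_colexKey v x y)
  constructor
  · intro h1 x y hxy
    rcases hxy.eq_or_lt with rfl | hlt
    · exact le_rfl
    · exact (Prod.Lex.toLex_lt_toLex'.1 ((hk x y).1 (by simpa [h1] using hlt))).1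
  · intro hmono
    have hG : StrictMono fun x => toLex (colexKey k (v x), x) := fun x y hxy =>
      Prod.Lex.toLex_lt_toLex'.2 ⟨hmono hxy.le, fun _ => hxy⟩
    exact Equiv.Perm.eq_of_lt_iff_lt fun x y => (hk x y).trans hG.lt_iff_lt

def suffixProd {G : Type*} [Monoid G] (σ : Fin k → G) (i : ℕ) : G :=
  ((List.ofFn σ).drop i).prod

section suffixProd

variable {G : Type*}

theorem suffixProd_zero [Monoid G] (σ : Fin k → G) : suffixProd σ 0 = (List.ofFn σ).prod := by
  rw [suffixProd, List.drop_zero]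

theorem suffixProd_self [Monoid G] (σ : Fin k → G) : suffixProd σ k = 1 := by
  rw [suffixProd, List.drop_eq_nil_of_le (by simp), List.prod_nil]

theorem suffixProd_eq_mul [Monoid G] (σ : Fin k → G) {i : ℕ} (hi : i < k) :
    suffixProd σ i = σ ⟨i, hi⟩ * suffixProd σ (i + 1) := by
  rw [suffixProd, List.drop_eq_getElem_cons (by simpa using hi), List.prod_cons,
    List.getElem_ofFn]
  rfl

theorem eq_suffixProd_mul_inv [Group G] (σ : Fin k → G) (i : Fin k) :
    σ i = suffixProd σ i * (suffixProd σ (i + 1))⁻¹ := by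
  rw [suffixProd_eq_mul σ i.isLt, mul_inv_cancel_right]

theorem suffixProd_mul_inv [Group G] (t : ℕ → G) {i : ℕ} (hi : i ≤ k) :
    suffixProd (fun j : Fin k => t j * (t (j + 1))⁻¹) i = t i * (t k)⁻¹ := by
  induction hi using Nat.decreasingInduction with
  | self => rw [suffixProd_self, mul_inv_cancel]
  | of_succ i hi ih => rw [suffixProd_eq_mul _ hi, ih, mul_assoc, inv_mul_cancel_left]

end suffixProd

def blockMultiset (n : ℕ) (D : Finset ℕ) : Multiset ℕ :=
  univ.val.map fun p : Fin n => blockIndex D p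

def IsBoundedFactorization (E : Fin k → Finset ℕ) (σ : Fin k → Equiv.Perm (Fin n)) : Prop :=
  (List.ofFn σ).prod = 1 ∧ ∀ i, permDes (σ i) ⊆ E i

section blockLabels

variable (E : Fin k → Finset ℕ)

def blockLabels (σ : Fin k → Equiv.Perm (Fin n)) (x : Fin n) (i : Fin k) : ℕ :=
  blockIndex (E i) (suffixProd σ (i + 1) x)

theorem map_blockLabels_apply (σ : Fin k → Equiv.Perm (Fin n)) (i : Fin k) :
    univ.val.map (fun x => blockLabels E σ x i) = blockMultiset n (E i) :=
  Multiset.map_univ_val_comp_equiv (fun p : Fin n => blockIndex (E i) p) _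

variable {E}

theorem suffixProd_succ_lt_iff {σ : Fin k → Equiv.Perm (Fin n)}
    (hσ : ∀ i, permDes (σ i) ⊆ E i) (i : ℕ) (hi : i < k) (x y : Fin n) :
    suffixProd σ (i + 1) x < suffixProd σ (i + 1) y ↔
      toLex (blockLabels E σ x ⟨i, hi⟩, suffixProd σ i x) <
        toLex (blockLabels E σ y ⟨i, hi⟩, suffixProd σ i y) := by
  have hσi := eq_suffixProd_mul_inv σ ⟨i, hi⟩
  exact (permDes_mul_inv_subset_iff _ _ _).1 (hσi ▸ hσ ⟨i, hi⟩) x y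

theorem monotone_blockLabels {σ : Fin k → Equiv.Perm (Fin n)} (hσ : IsBoundedFactorization E σ) :
    Monotone (colexKey k ∘ blockLabels E σ) :=
  (eq_one_iff_monotone_colexKey ((suffixProd_zero σ).trans hσ.1)
    (suffixProd_succ_lt_iff hσ.2)).1 (suffixProd_self σ)

theorem eq_of_blockLabels_eq {σ τ : Fin k → Equiv.Perm (Fin n)} (hσ : IsBoundedFactorization E σ)
    (hτ : IsBoundedFactorization E τ) (h : blockLabels E σ = blockLabels E τ) : σ = τ := by
  have hsuffix : ∀ i ≤ k, suffixProd σ i = suffixProd τ i := by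
    intro i hi
    induction i with
    | zero => rw [suffixProd_zero, suffixProd_zero, hσ.1, hτ.1]
    | succ i ih =>
      refine Equiv.Perm.eq_of_lt_iff_lt fun x y => ?_
      rw [suffixProd_succ_lt_iff hσ.2 i hi, suffixProd_succ_lt_iff hτ.2 i hi, h, ih (by omega)]
  funext i
  rw [eq_suffixProd_mul_inv σ, eq_suffixProd_mul_inv τ, hsuffix i i.isLt.le,
    hsuffix (i + 1) i.isLt]

def rankSeq (v : Fin n → Fin k → ℕ) : ℕ → Equiv.Perm (Fin n)
  | 0 => 1
  | i + 1 => if hi : i < k then (Tuple.sort fun x => toLex (v x ⟨i, hi⟩, rankSeq v i x))⁻¹ else 1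

theorem rankSeq_succ_lt_iff (v : Fin n → Fin k → ℕ) (i : ℕ) (hi : i < k) (x y : Fin n) :
    rankSeq v (i + 1) x < rankSeq v (i + 1) y ↔
      toLex (v x ⟨i, hi⟩, rankSeq v i x) < toLex (v y ⟨i, hi⟩, rankSeq v i y) := by
  rw [rankSeq, dif_pos hi]
  refine (Tuple.lt_iff_sort_inv_lt (fun x y hxy => ?_) x y).symm
  exact (rankSeq v i).injective (congrArg Prod.snd (toLex.injective hxy))

theorem blockIndex_rankSeq {v : Fin n → Fin k → ℕ}
    (hmarg : ∀ i, univ.val.map (fun x => v x i) = blockMultiset n (E i)) (i : ℕ) (hi : i < k)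
    (x : Fin n) : blockIndex (E ⟨i, hi⟩) (rankSeq v (i + 1) x) = v x ⟨i, hi⟩ := by
  set r := rankSeq v (i + 1)
  have hmono : Monotone fun p => v (r⁻¹ p) ⟨i, hi⟩ := by
    refine monotone_iff_forall_lt.2 fun p q hpq => ?_
    have hlex := (rankSeq_succ_lt_iff v i hi (r⁻¹ p) (r⁻¹ q)).1 (by simpa [r] using hpq)
    exact (Prod.Lex.toLex_lt_toLex'.1 hlex).1
  have hblock : Monotone fun p : Fin n => blockIndex (E ⟨i, hi⟩) p := fun p q hpq =>
    blockIndex_mono _ hpq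
  have hsame : univ.val.map (fun p => v (r⁻¹ p) ⟨i, hi⟩) = blockMultiset n (E ⟨i, hi⟩) :=
    (Multiset.map_univ_val_comp_equiv (fun x => v x ⟨i, hi⟩) r⁻¹).trans (hmarg _)
  simpa using (congrFun (eq_of_monotone_of_map_univ_eq hmono hblock hsame) (r x)).symm

theorem exists_blockLabels_eq {v : Fin n → Fin k → ℕ}
    (hmarg : ∀ i, univ.val.map (fun x => v x i) = blockMultiset n (E i))
    (hmono : Monotone (colexKey k ∘ v)) :
    ∃ σ, IsBoundedFactorization E σ ∧ blockLabels E σ = v := by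
  set t := rankSeq v
  have htk : t k = 1 := (eq_one_iff_monotone_colexKey rfl (rankSeq_succ_lt_iff v)).2 hmono
  set σ : Fin k → Equiv.Perm (Fin n) := fun j => t j * (t (j + 1))⁻¹
  have hsuffix : ∀ i ≤ k, suffixProd σ i = t i := fun i hi => by
    rw [suffixProd_mul_inv t hi, htk, inv_one, mul_one]
  refine ⟨σ, ⟨?_, fun i => ?_⟩, ?_⟩
  · rw [← suffixProd_zero, hsuffix 0 (Nat.zero_le _)]
    rfl
  · rw [permDes_mul_inv_subset_iff]
    intro x y
    rw [blockIndex_rankSeq hmarg i i.isLt x, blockIndex_rankSeq hmarg i i.isLt y]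
    exact rankSeq_succ_lt_iff v i i.isLt x y
  · funext x i
    rw [blockLabels, hsuffix (i + 1) i.isLt]
    exact blockIndex_rankSeq hmarg i i.isLt x

end blockLabels

def marginTables {ι α : Type*} (n : ℕ) (m : ι → Multiset α) : Set (Multiset (ι → α)) :=
  {M | Multiset.card M = n ∧ ∀ i, M.map (fun a => a i) = m i}

theorem card_marginTables_comp {ι α : Type*} (n : ℕ) (m : ι → Multiset α) (π : Equiv.Perm ι) :
    Nat.card (marginTables n (m ∘ π)) = Nat.card (marginTables n m) := by
  let e : Multiset (ι → α) ≃ Multiset (ι → α) :=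
    { toFun := Multiset.map (· ∘ π.symm)
      invFun := Multiset.map (· ∘ π)
      left_inv := fun M => by simp [Multiset.map_map, Function.comp_def]
      right_inv := fun M => by simp [Multiset.map_map, Function.comp_def] }
  refine Nat.card_congr (e.subtypeEquiv fun M => ?_)
  simp only [marginTables, e, Set.mem_ofPred_eq, Function.comp_apply, Equiv.coe_fn_mk,
    Multiset.card_map, Multiset.map_map, Function.comp_def]
  exact and_congr_right fun _ => π.forall_congr fun i => by simp

theorem card_isBoundedFactorization (E : Fin k → Finset ℕ) :
    Nat.card {σ : Fin k → Equiv.Perm (Fin n) // IsBoundedFactorization E σ} =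
      Nat.card (marginTables n fun i => blockMultiset n (E i)) := by
  refine Nat.card_congr (Equiv.ofBijective
    (fun σ => ⟨univ.val.map (blockLabels E σ.1), by simp, fun i => ?_⟩) ⟨?_, ?_⟩)
  · rw [Multiset.map_map]
    exact map_blockLabels_apply E σ.1 i
  · rintro ⟨σ, hσ⟩ ⟨τ, hτ⟩ h
    have hkeys := congrArg (fun M => M.map (colexKey k)) (congrArg Subtype.val h)
    simp only [Multiset.map_map] at hkeys
    exact Subtype.ext <| eq_of_blockLabels_eq hσ hτ <| (colexKey k).injective.comp_left <|
      eq_of_monotone_of_map_univ_eq (monotone_blockLabels hσ) (monotone_blockLabels hτ) hkeys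
  · rintro ⟨M, hcard, hmarg⟩
    obtain ⟨w, hw, hwM⟩ := exists_monotone_map_univ_eq (M.map (colexKey k)) (by simpa using hcard)
    have hvM : univ.val.map ((colexKey k).symm ∘ w) = M := by
      rw [← Multiset.map_map, hwM, Multiset.map_map]
      simp
    obtain ⟨σ, hσ, hv⟩ := exists_blockLabels_eq (E := E) (v := (colexKey k).symm ∘ w)
      (fun i => by simpa [← hvM, Multiset.map_map, Function.comp_def] using hmarg i)
      (by rwa [← Function.comp_assoc, Equiv.self_comp_symm, Function.id_comp])
    refine ⟨⟨σ, hσ⟩, Subtype.ext ?_⟩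
    change univ.val.map (blockLabels E σ) = M
    rw [hv, hvM]

open Classical in
theorem card_isBoundedFactorization_eq_sum (E : Fin k → Finset ℕ) :
    Nat.card {σ : Fin k → Equiv.Perm (Fin n) // IsBoundedFactorization E σ} =
      ∑ F ∈ Iic E, Nat.card {σ : Fin k → Equiv.Perm (Fin n) //
        (List.ofFn σ).prod = 1 ∧ ∀ i, permDes (σ i) = F i} := by
  rw [Nat.card_eq_fintype_card, Fintype.card_subtype,
    card_eq_sum_card_fiberwise (f := fun σ i => permDes (σ i)) (t := Iic E)]
  · refine sum_congr rfl fun F hF => ?_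
    rw [Nat.card_eq_fintype_card, Fintype.card_subtype]
    congr 1
    ext σ
    simp only [mem_filter, mem_univ, true_and, funext_iff]
    constructor
    · rintro ⟨hσ, hdes⟩
      exact ⟨hσ.1, hdes⟩
    · rintro ⟨hprod, hdes⟩
      exact ⟨⟨hprod, fun i => hdes i ▸ mem_Iic.1 hF i⟩, hdes⟩
  · intro σ hσ
    rw [mem_coe, mem_filter] at hσ
    exact mem_coe.2 (mem_Iic.2 hσ.2.2)

end

/-- For any descent sets `D_1, …, D_k ⊆ [n-1]` and any permutation `π` of `{1, …, k}`,
the number of `k`-tuples `(σ_1, …, σ_k)` with `σ_1 ⋯ σ_k = 1` and `Des(σ_i) = D_i`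
equals the number of such tuples with `Des(σ_i) = D_{π(i)}`. -/
theorem stmt11 (n k : ℕ) (D : Fin k → Finset ℕ) (π : Equiv.Perm (Fin k)) :
    Nat.card {σ : Fin k → Equiv.Perm (Fin n) //
        (List.ofFn σ).prod = 1 ∧ ∀ i, permDes (σ i) = D i} =
      Nat.card {σ : Fin k → Equiv.Perm (Fin n) //
        (List.ofFn σ).prod = 1 ∧ ∀ i, permDes (σ i) = D (π i)} := by
  refine (comp_orderIso_eq_of_sum_Iic π.compOrderIso
    (f := fun E => Nat.card {σ : Fin k → Equiv.Perm (Fin n) // IsBoundedFactorization E σ})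
    card_isBoundedFactorization_eq_sum (fun E => ?_) D).symm
  rw [card_isBoundedFactorization, card_isBoundedFactorization]
  exact card_marginTables_comp n (fun i => blockMultiset n (E i)) π
end
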